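/- arXiv:2512.17036 — 6 statements merged into one kernel-verified Lean document; each statement's English description precedes it below -/
import Mathlib

section
/- Let Ψ: ℝⁿ → ℝʳ be smooth, let f, g_1, …, g_m be smooth vector fields on ℝⁿ, and let A, B_1, …, B_m ∈ ℝ^{r×r}. Suppose that for every point x₀ ∈ ℝⁿ and every constant control vector u ∈ ℝᵐ there exist ε > 0 and a differentiable curve x: (−ε, ε) → ℝⁿ with x(0) = x₀ such that x′(t) = f(x(t)) + Σᵢ uᵢ gᵢ(x(t)) for all t, and such that the curve z = Ψ∘x satisfies z′(t) = A z(t) + Σᵢ uᵢ Bᵢ z(t) for all t. Then DΨ(x) f(x) = A Ψ(x) and DΨ(x) gᵢ(x) = Bᵢ Ψ(x) for all x ∈ ℝⁿ and all i = 1, …, m; that is, f and the linear field z ↦ Az, and each gᵢ and z ↦ Bᵢz, are Ψ-related. -/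
open Set

/-! At `t = 0` the chain rule and uniqueness of derivatives give
`DΨ(x₀)(f x₀ + ∑ uᵢ gᵢ x₀) = A Ψ(x₀) + ∑ uᵢ Bᵢ Ψ(x₀)` for every constant control `u`;
both sides are affine in `u`, so comparing them at `u = 0` and at the unit vectors separates the
drift from each control field. -/

theorem HasDerivAt.fderiv_apply_eq_of_comp {E F : Type*} [NormedAddCommGroup E] [NormedSpace ℝ E]
    [NormedAddCommGroup F] [NormedSpace ℝ F] {Ψ : E → F} {γ : ℝ → E} {v : E} {w : F} {t : ℝ}
    (hΨ : DifferentiableAt ℝ Ψ (γ t)) (hγ : HasDerivAt γ v t)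
    (hΨγ : HasDerivAt (fun s => Ψ (γ s)) w t) :
    fderiv ℝ Ψ (γ t) v = w :=
  (hΨ.hasFDerivAt.comp_hasDerivAt t hγ).unique hΨγ

theorem LinearMap.eq_and_forall_eq_of_map_add_sum_smul {R M N ι : Type*} [CommSemiring R]
    [AddCommGroup M] [Module R M] [AddCommGroup N] [Module R N] [Fintype ι] [DecidableEq ι]
    (L : M →ₗ[R] N) {a : M} {b : ι → M} {c : N} {d : ι → N}
    (h : ∀ u : ι → R, L (a + ∑ i, u i • b i) = c + ∑ i, u i • d i) :
    L a = c ∧ ∀ i, L (b i) = d i := by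
  have hconst : L a = c := by simpa using h 0
  refine ⟨hconst, fun i => ?_⟩
  have hi := h (Pi.single i 1)
  simp only [Pi.single_apply, ite_smul, one_smul, zero_smul, Finset.sum_ite_eq',
    Finset.mem_univ, if_true, map_add, hconst] at hi
  exact add_left_cancel hi

theorem psi_related_of_lifted_solutions_general {n r m : ℕ}
    (Ψ : (Fin n → ℝ) → (Fin r → ℝ)) (hΨ : ContDiff ℝ (⊤ : ℕ∞) Ψ)
    (f : (Fin n → ℝ) → (Fin n → ℝ)) (g : Fin m → (Fin n → ℝ) → (Fin n → ℝ))
    (A : Matrix (Fin r) (Fin r) ℝ) (B : Fin m → Matrix (Fin r) (Fin r) ℝ)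
    (hsol : ∀ (x₀ : Fin n → ℝ) (u : Fin m → ℝ), ∃ ε : ℝ, 0 < ε ∧
      ∃ x : ℝ → (Fin n → ℝ), x 0 = x₀ ∧
        (∀ t ∈ Ioo (-ε) ε, HasDerivAt x (f (x t) + ∑ i, u i • g i (x t)) t) ∧
        (∀ t ∈ Ioo (-ε) ε, HasDerivAt (fun s => Ψ (x s))
          (A.mulVec (Ψ (x t)) + ∑ i, u i • (B i).mulVec (Ψ (x t))) t)) :
    ∀ x : Fin n → ℝ,
      fderiv ℝ Ψ x (f x) = A.mulVec (Ψ x) ∧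
      ∀ i : Fin m, fderiv ℝ Ψ x (g i x) = (B i).mulVec (Ψ x) := by
  intro x₀
  have hcontrol : ∀ u : Fin m → ℝ, fderiv ℝ Ψ x₀ (f x₀ + ∑ i, u i • g i x₀) =
      A.mulVec (Ψ x₀) + ∑ i, u i • (B i).mulVec (Ψ x₀) := by
    intro u
    obtain ⟨ε, hε, x, rfl, hx, hz⟩ := hsol x₀ u
    have h0 : (0 : ℝ) ∈ Ioo (-ε) ε := ⟨by linarith, hε⟩
    exact (hx 0 h0).fderiv_apply_eq_of_comp (hΨ.differentiable (by simp) _) (hz 0 h0)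
  exact (fderiv ℝ Ψ x₀ : (Fin n → ℝ) →ₗ[ℝ] (Fin r → ℝ)).eq_and_forall_eq_of_map_add_sum_smul
    hcontrol

/-- if for every initial point and every constant control the control-affine system
admits a local solution whose lift through `Ψ` solves the bilinear system, then `f` is
`Ψ`-related to `z ↦ Az` and each `gᵢ` is `Ψ`-related to `z ↦ Bᵢz`. -/
theorem psi_related_of_lifted_solutions {n r m : ℕ}
    (Ψ : (Fin n → ℝ) → (Fin r → ℝ)) (hΨ : ContDiff ℝ (⊤ : ℕ∞) Ψ)
    (f : (Fin n → ℝ) → (Fin n → ℝ)) (g : Fin m → (Fin n → ℝ) → (Fin n → ℝ))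
    (hf : ContDiff ℝ (⊤ : ℕ∞) f) (hg : ∀ i, ContDiff ℝ (⊤ : ℕ∞) (g i))
    (A : Matrix (Fin r) (Fin r) ℝ) (B : Fin m → Matrix (Fin r) (Fin r) ℝ)
    (hsol : ∀ (x₀ : Fin n → ℝ) (u : Fin m → ℝ), ∃ ε : ℝ, 0 < ε ∧
      ∃ x : ℝ → (Fin n → ℝ), x 0 = x₀ ∧
        (∀ t ∈ Ioo (-ε) ε, HasDerivAt x (f (x t) + ∑ i, u i • g i (x t)) t) ∧
        (∀ t ∈ Ioo (-ε) ε, HasDerivAt (fun s => Ψ (x s))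
          (A.mulVec (Ψ (x t)) + ∑ i, u i • (B i).mulVec (Ψ (x t))) t)) :
    ∀ x : Fin n → ℝ,
      fderiv ℝ Ψ x (f x) = A.mulVec (Ψ x) ∧
      ∀ i : Fin m, fderiv ℝ Ψ x (g i x) = (B i).mulVec (Ψ x) :=
  psi_related_of_lifted_solutions_general Ψ hΨ f g A B hsol
end

section
/- (Necessity part of the main theorem.) Let f, g_1, …, g_m be smooth vector fields on ℝⁿ, let Ψ: ℝⁿ → ℝʳ be smooth with component functions γ₁, …, γ_r, and suppose there exist matrices A, B_1, …, B_m ∈ ℝ^{r×r} such that DΨ(x) f(x) = A Ψ(x) and DΨ(x) gᵢ(x) = Bᵢ Ψ(x) for all x ∈ ℝⁿ and i = 1, …, m. Then the subspace Γ₀ = span{γ₁, …, γ_r} ⊆ C^∞(ℝⁿ, ℝ) satisfies L_f Γ₀ ⊆ Γ₀ and L_{gᵢ} Γ₀ ⊆ Γ₀ for each i, and the EBIF sequence generated by T = {f, g_1, …, g_m} initiated with Γ₀ satisfies Γ_k = Γ₀ for all k; in particular the EBIF module Γ* = Γ₀ is a finite-dimensional vector space. -/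
/-! Every element of `Γ₀` is `x ↦ c ⬝ᵥ Ψ x`, and its Lie derivative along `τ` with
`DΨ · τ = M Ψ` is `x ↦ c ⬝ᵥ M Ψ x = (c ᵥ* M) ⬝ᵥ Ψ x`, again in `Γ₀`. So each step of the EBIF
recursion adds nothing to `Γ₀`. -/

open Set

/-- Lie derivative of a function along a vector field on ℝⁿ: `L_τ γ (x) = Dγ(x)·τ(x)`. -/
noncomputable def lieDeriv {n : ℕ} (τ : (Fin n → ℝ) → (Fin n → ℝ)) (γ : (Fin n → ℝ) → ℝ) :
    (Fin n → ℝ) → ℝ :=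
  fun x => fderiv ℝ γ x (τ x)

/-- `L_τ Γ`: the subspace spanned by Lie derivatives of elements of `Γ`. -/
noncomputable def lieDerivSub {n : ℕ} (τ : (Fin n → ℝ) → (Fin n → ℝ))
    (Γ : Submodule ℝ ((Fin n → ℝ) → ℝ)) : Submodule ℝ ((Fin n → ℝ) → ℝ) :=
  Submodule.span ℝ (lieDeriv τ '' (Γ : Set ((Fin n → ℝ) → ℝ)))

/-- The EBIF sequence generated by the finite set `T` of vector fields, initiated with `Γ0`:
`Γ_{k+1} = Γ_k + Σ_{τ ∈ T} L_τ Γ_k`. -/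
noncomputable def ebif {n : ℕ} (T : Finset ((Fin n → ℝ) → (Fin n → ℝ)))
    (Γ0 : Submodule ℝ ((Fin n → ℝ) → ℝ)) : ℕ → Submodule ℝ ((Fin n → ℝ) → ℝ)
  | 0 => Γ0
  | k + 1 => ebif T Γ0 k ⊔ T.sup (fun τ => lieDerivSub τ (ebif T Γ0 k))

open Matrix

variable {n r : ℕ}

theorem mem_span_range_eval_iff {X : Type*} (Ψ : X → Fin r → ℝ) (γ : X → ℝ) :
    γ ∈ Submodule.span ℝ (range fun j x => Ψ x j) ↔ ∃ c : Fin r → ℝ, γ = fun x => c ⬝ᵥ Ψ x := by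
  rw [Submodule.mem_span_range_iff_exists_fun]
  refine exists_congr fun c => ⟨fun h => ?_, fun h => ?_⟩ <;> subst_vars <;> ext x <;>
    simp [dotProduct, Finset.sum_apply]

theorem lieDeriv_dotProduct {Ψ : (Fin n → ℝ) → Fin r → ℝ} (hΨ : Differentiable ℝ Ψ)
    (τ : (Fin n → ℝ) → Fin n → ℝ) (c : Fin r → ℝ) :
    lieDeriv τ (fun x => c ⬝ᵥ Ψ x) = fun x => c ⬝ᵥ fderiv ℝ Ψ x (τ x) := by
  ext x
  let L : (Fin r → ℝ) →L[ℝ] ℝ := LinearMap.toContinuousLinearMap (dotProductBilin ℝ ℝ c)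
  have hL : HasFDerivAt (fun x => c ⬝ᵥ Ψ x) (L.comp (fderiv ℝ Ψ x)) x :=
    L.hasFDerivAt.comp x (hΨ x).hasFDerivAt
  simp only [lieDeriv, hL.fderiv]
  rfl

theorem lieDerivSub_span_range_eval_le {Ψ : (Fin n → ℝ) → Fin r → ℝ} (hΨ : Differentiable ℝ Ψ)
    {τ : (Fin n → ℝ) → Fin n → ℝ} {M : Matrix (Fin r) (Fin r) ℝ}
    (hM : ∀ x, fderiv ℝ Ψ x (τ x) = M *ᵥ Ψ x) :
    lieDerivSub τ (Submodule.span ℝ (range fun j x => Ψ x j)) ≤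
      Submodule.span ℝ (range fun j x => Ψ x j) := by
  refine Submodule.span_le.mpr ?_
  rintro _ ⟨γ, hγ, rfl⟩
  obtain ⟨c, rfl⟩ := (mem_span_range_eval_iff Ψ γ).mp hγ
  refine (mem_span_range_eval_iff Ψ _).mpr ⟨c ᵥ* M, ?_⟩
  simp only [lieDeriv_dotProduct hΨ, hM, dotProduct_mulVec]

theorem ebif_eq_of_forall_lieDerivSub_le {T : Finset ((Fin n → ℝ) → Fin n → ℝ)}
    {Γ0 : Submodule ℝ ((Fin n → ℝ) → ℝ)} (hT : ∀ τ ∈ T, lieDerivSub τ Γ0 ≤ Γ0) :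
    ∀ k, ebif T Γ0 k = Γ0
  | 0 => rfl
  | k + 1 => by
    rw [ebif, ebif_eq_of_forall_lieDerivSub_le hT k, sup_eq_left]
    exact Finset.sup_le hT

theorem ebif_necessity_general {n r m : ℕ}
    (f : (Fin n → ℝ) → (Fin n → ℝ)) (g : Fin m → (Fin n → ℝ) → (Fin n → ℝ))
    (Ψ : (Fin n → ℝ) → (Fin r → ℝ)) (hΨ : ContDiff ℝ (⊤ : ℕ∞) Ψ)
    (A : Matrix (Fin r) (Fin r) ℝ) (B : Fin m → Matrix (Fin r) (Fin r) ℝ)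
    (hA : ∀ x, fderiv ℝ Ψ x (f x) = A.mulVec (Ψ x))
    (hB : ∀ i, ∀ x, fderiv ℝ Ψ x (g i x) = (B i).mulVec (Ψ x))
    (T : Finset ((Fin n → ℝ) → (Fin n → ℝ)))
    (hTset : (T : Set ((Fin n → ℝ) → (Fin n → ℝ))) = insert f (Set.range g))
    (Γ0 : Submodule ℝ ((Fin n → ℝ) → ℝ))
    (hΓ0 : Γ0 = Submodule.span ℝ (Set.range fun j : Fin r => fun x : Fin n → ℝ => Ψ x j)) :
    lieDerivSub f Γ0 ≤ Γ0 ∧ (∀ i, lieDerivSub (g i) Γ0 ≤ Γ0) ∧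
    (∀ k : ℕ, ebif T Γ0 k = Γ0) ∧ FiniteDimensional ℝ Γ0 := by
  subst hΓ0
  have hΨd : Differentiable ℝ Ψ := hΨ.differentiable (by norm_num)
  have hf := lieDerivSub_span_range_eval_le hΨd hA
  have hg i := lieDerivSub_span_range_eval_le hΨd (hB i)
  refine ⟨hf, hg, ebif_eq_of_forall_lieDerivSub_le fun τ hτ => ?_,
    FiniteDimensional.span_of_finite ℝ (finite_range _)⟩
  rw [← Finset.mem_coe, hTset] at hτ
  rcases hτ with rfl | ⟨i, rfl⟩
  exacts [hf, hg i]

/-- necessity part of the main theorem: if `Ψ` exactly bilinearizes the system,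
then the span `Γ₀` of the components of `Ψ` is invariant under `L_f` and each `L_{gᵢ}`, the EBIF
sequence generated by `T = {f, g₁, …, g_m}` initiated with `Γ₀` is constantly `Γ₀`, and the
EBIF module `Γ* = Γ₀` is finite-dimensional. -/
theorem ebif_necessity {n r m : ℕ}
    (f : (Fin n → ℝ) → (Fin n → ℝ)) (g : Fin m → (Fin n → ℝ) → (Fin n → ℝ))
    (hf : ContDiff ℝ (⊤ : ℕ∞) f) (hg : ∀ i, ContDiff ℝ (⊤ : ℕ∞) (g i))
    (Ψ : (Fin n → ℝ) → (Fin r → ℝ)) (hΨ : ContDiff ℝ (⊤ : ℕ∞) Ψ)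
    (A : Matrix (Fin r) (Fin r) ℝ) (B : Fin m → Matrix (Fin r) (Fin r) ℝ)
    (hA : ∀ x, fderiv ℝ Ψ x (f x) = A.mulVec (Ψ x))
    (hB : ∀ i, ∀ x, fderiv ℝ Ψ x (g i x) = (B i).mulVec (Ψ x))
    (T : Finset ((Fin n → ℝ) → (Fin n → ℝ)))
    (hTset : (T : Set ((Fin n → ℝ) → (Fin n → ℝ))) = insert f (Set.range g))
    (Γ0 : Submodule ℝ ((Fin n → ℝ) → ℝ))
    (hΓ0 : Γ0 = Submodule.span ℝ (Set.range fun j : Fin r => fun x : Fin n → ℝ => Ψ x j)) :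
    lieDerivSub f Γ0 ≤ Γ0 ∧ (∀ i, lieDerivSub (g i) Γ0 ≤ Γ0) ∧
    (∀ k : ℕ, ebif T Γ0 k = Γ0) ∧ FiniteDimensional ℝ Γ0 :=
  ebif_necessity_general f g Ψ hΨ A B hA hB T hTset Γ0 hΓ0
end

section
/- (Sufficiency part of the main theorem.) Let f, g_1, …, g_m be smooth vector fields on ℝⁿ, and let Γ ⊆ C^∞(ℝⁿ, ℝ) be a finite-dimensional subspace with basis γ₁, …, γ_r such that L_f Γ ⊆ Γ and L_{gᵢ} Γ ⊆ Γ for each i = 1, …, m. Define Ψ: ℝⁿ → ℝʳ by Ψ(x) = (γ₁(x), …, γ_r(x)). Then there exist matrices A, B_1, …, B_m ∈ ℝ^{r×r} such that DΨ(x) f(x) = A Ψ(x) and DΨ(x) gᵢ(x) = Bᵢ Ψ(x) for all x ∈ ℝⁿ; consequently, for any control functions uᵢ and any differentiable curve x(t) satisfying ẋ(t) = f(x(t)) + Σᵢ uᵢ(t) gᵢ(x(t)), the lifted curve z(t) = Ψ(x(t)) satisfies the bilinear equation ż(t) = A z(t) + Σᵢ uᵢ(t) Bᵢ z(t). -/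
/-!
Invariance of `Γ = span {γⱼ}` under `L_τ` writes each `L_τ γⱼ` as `∑ₖ Mⱼₖ γₖ`; since the
components of `DΨ(x) τ(x)` are exactly the values `L_τ γⱼ (x)`, this says `DΨ(x) τ(x) = M Ψ(x)`.
The bilinear equation for `Ψ ∘ x` is then the chain rule together with linearity of `DΨ(x)`.
-/

open Set

section LieDeriv

variable {n : ℕ} {ι : Type*}

theorem exists_matrix_lieDeriv_eq_sum [Fintype ι] {τ : (Fin n → ℝ) → (Fin n → ℝ)}
    {γ : ι → (Fin n → ℝ) → ℝ}
    (hτ : lieDerivSub τ (Submodule.span ℝ (range γ)) ≤ Submodule.span ℝ (range γ)) :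
    ∃ M : Matrix ι ι ℝ, ∀ j, lieDeriv τ (γ j) = ∑ k, M j k • γ k := by
  have hmem : ∀ j, lieDeriv τ (γ j) ∈ Submodule.span ℝ (range γ) := fun j =>
    hτ (Submodule.subset_span ⟨γ j, Submodule.subset_span ⟨j, rfl⟩, rfl⟩)
  choose M hM using fun j => (Submodule.mem_span_range_iff_exists_fun ℝ).mp (hmem j)
  exact ⟨Matrix.of M, fun j => (hM j).symm⟩

theorem fderiv_pi_apply_eq_lieDeriv {γ : ι → (Fin n → ℝ) → ℝ} {x : Fin n → ℝ}
    (hγ : ∀ j, DifferentiableAt ℝ (γ j) x) (τ : (Fin n → ℝ) → (Fin n → ℝ)) :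
    fderiv ℝ (fun y j => γ j y) x (τ x) = fun j => lieDeriv τ (γ j) x := by
  rw [fderiv_pi hγ]
  rfl

theorem exists_matrix_fderiv_apply_eq_mulVec [Fintype ι] {τ : (Fin n → ℝ) → (Fin n → ℝ)}
    {γ : ι → (Fin n → ℝ) → ℝ} (hγ : ∀ j, Differentiable ℝ (γ j))
    (hτ : lieDerivSub τ (Submodule.span ℝ (range γ)) ≤ Submodule.span ℝ (range γ)) :
    ∃ M : Matrix ι ι ℝ, ∀ x,
      fderiv ℝ (fun y j => γ j y) x (τ x) = M.mulVec fun j => γ j x := by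
  obtain ⟨M, hM⟩ := exists_matrix_lieDeriv_eq_sum hτ
  refine ⟨M, fun x => ?_⟩
  rw [fderiv_pi_apply_eq_lieDeriv (fun j => hγ j x)]
  ext j
  simp [hM, Matrix.mulVec, dotProduct]

end LieDeriv

theorem hasDerivAt_comp_of_fderiv_apply_eq_mulVec {E ι κ : Type*} [NormedAddCommGroup E]
    [NormedSpace ℝ E] [Fintype ι] [Fintype κ] {Ψ : E → ι → ℝ} {f : E → E} {g : κ → E → E}
    {A : Matrix ι ι ℝ} {B : κ → Matrix ι ι ℝ} {u : κ → ℝ} {x : ℝ → E} {t : ℝ}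
    (hΨ : DifferentiableAt ℝ Ψ (x t)) (hA : fderiv ℝ Ψ (x t) (f (x t)) = A.mulVec (Ψ (x t)))
    (hB : ∀ i, fderiv ℝ Ψ (x t) (g i (x t)) = (B i).mulVec (Ψ (x t)))
    (hx : HasDerivAt x (f (x t) + ∑ i, u i • g i (x t)) t) :
    HasDerivAt (fun s => Ψ (x s))
      (A.mulVec (Ψ (x t)) + ∑ i, u i • (B i).mulVec (Ψ (x t))) t := by
  have hlin : fderiv ℝ Ψ (x t) (f (x t) + ∑ i, u i • g i (x t))
      = A.mulVec (Ψ (x t)) + ∑ i, u i • (B i).mulVec (Ψ (x t)) := by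
    simp only [map_add, map_sum, map_smul, hA, hB]
  exact hlin ▸ hΨ.hasFDerivAt.comp_hasDerivAt t hx

theorem ebif_sufficiency_general {n r m : ℕ}
    (f : (Fin n → ℝ) → (Fin n → ℝ)) (g : Fin m → (Fin n → ℝ) → (Fin n → ℝ))
    (γ : Fin r → ((Fin n → ℝ) → ℝ)) (hγ : ∀ j, ContDiff ℝ (⊤ : ℕ∞) (γ j))
    (Γ : Submodule ℝ ((Fin n → ℝ) → ℝ)) (hΓ : Γ = Submodule.span ℝ (Set.range γ))
    (hinvf : lieDerivSub f Γ ≤ Γ) (hinvg : ∀ i, lieDerivSub (g i) Γ ≤ Γ)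
    (Ψ : (Fin n → ℝ) → (Fin r → ℝ)) (hΨ : Ψ = fun x => fun j => γ j x) :
    ∃ A : Matrix (Fin r) (Fin r) ℝ, ∃ B : Fin m → Matrix (Fin r) (Fin r) ℝ,
      (∀ x, fderiv ℝ Ψ x (f x) = A.mulVec (Ψ x)) ∧
      (∀ i, ∀ x, fderiv ℝ Ψ x (g i x) = (B i).mulVec (Ψ x)) ∧
      ∀ (u : ℝ → (Fin m → ℝ)) (x : ℝ → (Fin n → ℝ)),
        (∀ t : ℝ, HasDerivAt x (f (x t) + ∑ i, u t i • g i (x t)) t) →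
        ∀ t : ℝ, HasDerivAt (fun s => Ψ (x s))
          (A.mulVec (Ψ (x t)) + ∑ i, u t i • (B i).mulVec (Ψ (x t))) t := by
  subst hΓ hΨ
  have hγd : ∀ j, Differentiable ℝ (γ j) := fun j => (hγ j).differentiable (by simp)
  obtain ⟨A, hA⟩ := exists_matrix_fderiv_apply_eq_mulVec hγd hinvf
  choose B hB using fun i => exists_matrix_fderiv_apply_eq_mulVec hγd (hinvg i)
  refine ⟨A, B, hA, hB, fun u x hx t => ?_⟩
  exact hasDerivAt_comp_of_fderiv_apply_eq_mulVec
    (differentiableAt_pi.mpr fun j => hγd j (x t)) (hA _) (fun i => hB i _) (hx t)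

/-- sufficiency part of the main theorem: if `Γ = span{γ₁,…,γ_r}` is a
finite-dimensional subspace with basis `γ₁,…,γ_r` invariant under `L_f` and each `L_{gᵢ}`, then
`Ψ = (γ₁,…,γ_r)` pushes `f` and the `gᵢ` forward to linear vector fields, and any solution of the
control-affine system lifts through `Ψ` to a solution of the corresponding bilinear system. -/
theorem ebif_sufficiency {n r m : ℕ}
    (f : (Fin n → ℝ) → (Fin n → ℝ)) (g : Fin m → (Fin n → ℝ) → (Fin n → ℝ))
    (hf : ContDiff ℝ (⊤ : ℕ∞) f) (hg : ∀ i, ContDiff ℝ (⊤ : ℕ∞) (g i))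
    (γ : Fin r → ((Fin n → ℝ) → ℝ)) (hγ : ∀ j, ContDiff ℝ (⊤ : ℕ∞) (γ j))
    (hli : LinearIndependent ℝ γ)
    (Γ : Submodule ℝ ((Fin n → ℝ) → ℝ)) (hΓ : Γ = Submodule.span ℝ (Set.range γ))
    (hinvf : lieDerivSub f Γ ≤ Γ) (hinvg : ∀ i, lieDerivSub (g i) Γ ≤ Γ)
    (Ψ : (Fin n → ℝ) → (Fin r → ℝ)) (hΨ : Ψ = fun x => fun j => γ j x) :
    ∃ A : Matrix (Fin r) (Fin r) ℝ, ∃ B : Fin m → Matrix (Fin r) (Fin r) ℝ,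
      (∀ x, fderiv ℝ Ψ x (f x) = A.mulVec (Ψ x)) ∧
      (∀ i, ∀ x, fderiv ℝ Ψ x (g i x) = (B i).mulVec (Ψ x)) ∧
      ∀ (u : ℝ → (Fin m → ℝ)) (x : ℝ → (Fin n → ℝ)),
        (∀ t : ℝ, HasDerivAt x (f (x t) + ∑ i, u t i • g i (x t)) t) →
        ∀ t : ℝ, HasDerivAt (fun s => Ψ (x s))
          (A.mulVec (Ψ (x t)) + ∑ i, u t i • (B i).mulVec (Ψ (x t))) t :=
  ebif_sufficiency_general f g γ hγ Γ hΓ hinvf hinvg Ψ hΨ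
end

section
/- Let Ψ: ℝⁿ → ℝʳ be smooth and suppose Ψ exactly bilinearizes the system with vector fields f, g_1, …, g_m and matrices A, B_1, …, B_m. Suppose P: ℝʳ → ℝⁿ satisfies P(Ψ(x)) = x for all x ∈ ℝⁿ (a left inverse of Ψ). Let u: [0, T] → ℝᵐ be continuous, let x: [0, T] → ℝⁿ be differentiable with ẋ(t) = f(x(t)) + Σᵢ uᵢ(t) gᵢ(x(t)) for all t, and let z: [0, T] → ℝʳ be any solution of the bilinear equation ż(t) = A z(t) + Σᵢ uᵢ(t) Bᵢ z(t) with z(0) = Ψ(x(0)). Then z(t) = Ψ(x(t)) and x(t) = P(z(t)) for all t ∈ [0, T]; that is, the nonlinear flow equals the composition P ∘ (bilinear flow) ∘ Ψ. -/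
/-!
By the chain rule and the bilinearization identities, `Ψ ∘ x` solves the same bilinear equation
`ż = (A + ∑ᵢ uᵢ(t) Bᵢ) z` as `z`, from the same initial value. The right-hand side is linear in `z`
with coefficients continuous in `t`, hence uniformly Lipschitz on the compact interval `[0, T]`, so
the Grönwall uniqueness theorem gives `z = Ψ ∘ x`; applying the left inverse `P` gives `x = P ∘ z`.
-/

open Set Matrix

theorem linear_ODE_solution_unique {E : Type*} [NormedAddCommGroup E] [NormedSpace ℝ E]
    {L : ℝ → E →L[ℝ] E} {a b : ℝ} {y₁ y₂ : ℝ → E} (hL : ContinuousOn L (Icc a b))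
    (hy₁ : ∀ t ∈ Icc a b, HasDerivWithinAt y₁ (L t (y₁ t)) (Icc a b) t)
    (hy₂ : ∀ t ∈ Icc a b, HasDerivWithinAt y₂ (L t (y₂ t)) (Icc a b) t)
    (ha : y₁ a = y₂ a) : EqOn y₁ y₂ (Icc a b) := by
  obtain ⟨K, hK⟩ := isCompact_Icc.exists_bound_of_continuousOn hL
  have hlip : ∀ t ∈ Ico a b, LipschitzOnWith K.toNNReal (L t) univ := by
    intro t ht
    have hnorm : ‖L t‖₊ ≤ K.toNNReal := by
      rw [← norm_toNNReal]
      exact Real.toNNReal_le_toNNReal (hK t (Ico_subset_Icc_self ht))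
    exact ((L t).lipschitz.weaken hnorm).lipschitzOnWith
  have hright : ∀ y : ℝ → E, (∀ t ∈ Icc a b, HasDerivWithinAt y (L t (y t)) (Icc a b) t) →
      ∀ t ∈ Ico a b, HasDerivWithinAt y (L t (y t)) (Ici t) t := fun y hy t ht =>
    (hy t (Ico_subset_Icc_self ht)).mono_of_mem_nhdsWithin (Icc_mem_nhdsGE_of_mem ht)
  exact ODE_solution_unique_of_mem_Icc_right hlip
    (fun t ht => (hy₁ t ht).continuousWithinAt) (hright y₁ hy₁) (fun _ _ => mem_univ _)
    (fun t ht => (hy₂ t ht).continuousWithinAt) (hright y₂ hy₂) (fun _ _ => mem_univ _) ha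

section

variable {ι κ : Type*} [Fintype ι] [Fintype κ]

theorem hasDerivWithinAt_comp_of_fderiv_eq_mulVec {E : Type*} [NormedAddCommGroup E]
    [NormedSpace ℝ E] {Ψ : E → ι → ℝ} {f : E → E} {g : κ → E → E} {A : Matrix ι ι ℝ}
    {B : κ → Matrix ι ι ℝ} {x : ℝ → E} {w : κ → ℝ} {s : Set ℝ} {t : ℝ}
    (hΨ : DifferentiableAt ℝ Ψ (x t)) (hA : fderiv ℝ Ψ (x t) (f (x t)) = A *ᵥ Ψ (x t))
    (hB : ∀ i, fderiv ℝ Ψ (x t) (g i (x t)) = B i *ᵥ Ψ (x t))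
    (hx : HasDerivWithinAt x (f (x t) + ∑ i, w i • g i (x t)) s t) :
    HasDerivWithinAt (Ψ ∘ x) (A *ᵥ Ψ (x t) + ∑ i, w i • B i *ᵥ Ψ (x t)) s t := by
  simpa only [map_add, map_sum, map_smul, hA, hB] using
    hΨ.hasFDerivAt.comp_hasDerivWithinAt t hx

noncomputable def bilinearGenerator (A : Matrix ι ι ℝ) (B : κ → Matrix ι ι ℝ) (w : κ → ℝ) :
    (ι → ℝ) →L[ℝ] ι → ℝ :=
  LinearMap.toContinuousLinearMap (mulVecBilin ℝ ℝ (A + ∑ i, w i • B i))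

theorem bilinearGenerator_apply (A : Matrix ι ι ℝ) (B : κ → Matrix ι ι ℝ) (w : κ → ℝ)
    (y : ι → ℝ) : bilinearGenerator A B w y = A *ᵥ y + ∑ i, w i • B i *ᵥ y := by
  simp [bilinearGenerator]

theorem continuous_bilinearGenerator (A : Matrix ι ι ℝ) (B : κ → Matrix ι ι ℝ) :
    Continuous (bilinearGenerator A B) := by
  have hmatrix : Continuous fun w : κ → ℝ => A + ∑ i, w i • B i := by fun_prop
  let toCLM : Matrix ι ι ℝ →ₗ[ℝ] (ι → ℝ) →L[ℝ] ι → ℝ :=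
    LinearMap.toContinuousLinearMap.toLinearMap ∘ₗ mulVecBilin ℝ ℝ
  exact toCLM.continuous_of_finiteDimensional.comp hmatrix

end

theorem nonlinear_flow_eq_projected_bilinear_flow_general {n r m : ℕ} (T : ℝ)
    (Ψ : (Fin n → ℝ) → (Fin r → ℝ)) (hΨ : ContDiff ℝ (⊤ : ℕ∞) Ψ)
    (f : (Fin n → ℝ) → (Fin n → ℝ)) (g : Fin m → (Fin n → ℝ) → (Fin n → ℝ))
    (A : Matrix (Fin r) (Fin r) ℝ) (B : Fin m → Matrix (Fin r) (Fin r) ℝ)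
    (hA : ∀ x, fderiv ℝ Ψ x (f x) = A.mulVec (Ψ x))
    (hB : ∀ i, ∀ x, fderiv ℝ Ψ x (g i x) = (B i).mulVec (Ψ x))
    (P : (Fin r → ℝ) → (Fin n → ℝ)) (hP : ∀ x, P (Ψ x) = x)
    (u : ℝ → (Fin m → ℝ)) (hu : ContinuousOn u (Icc (0 : ℝ) T))
    (x : ℝ → (Fin n → ℝ))
    (hx : ∀ t ∈ Icc (0 : ℝ) T,
      HasDerivWithinAt x (f (x t) + ∑ i, u t i • g i (x t)) (Icc (0 : ℝ) T) t)
    (z : ℝ → (Fin r → ℝ))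
    (hz : ∀ t ∈ Icc (0 : ℝ) T,
      HasDerivWithinAt z (A.mulVec (z t) + ∑ i, u t i • (B i).mulVec (z t)) (Icc (0 : ℝ) T) t)
    (hz0 : z 0 = Ψ (x 0)) :
    ∀ t ∈ Icc (0 : ℝ) T, z t = Ψ (x t) ∧ x t = P (z t) := by
  have hlift : EqOn z (Ψ ∘ x) (Icc 0 T) := by
    refine linear_ODE_solution_unique (L := fun t => bilinearGenerator A B (u t))
      ((continuous_bilinearGenerator A B).comp_continuousOn hu) ?_ ?_ hz0
    · simpa only [bilinearGenerator_apply] using hz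
    · intro t ht
      rw [bilinearGenerator_apply]
      exact hasDerivWithinAt_comp_of_fderiv_eq_mulVec (hΨ.differentiable (by simp) _)
        (hA _) (fun i => hB i _) (hx t ht)
  intro t ht
  exact ⟨hlift ht, by rw [hlift ht, Function.comp_apply, hP]⟩

/-- if `Ψ` exactly bilinearizes the system and `P` is a left inverse of `Ψ`, then
for continuous controls the solution of the bilinear system started at `Ψ(x(0))` coincides with
the lift of the nonlinear solution, and the nonlinear solution is recovered by `P`. -/
theorem nonlinear_flow_eq_projected_bilinear_flow {n r m : ℕ} (T : ℝ) (hT : 0 ≤ T)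
    (Ψ : (Fin n → ℝ) → (Fin r → ℝ)) (hΨ : ContDiff ℝ (⊤ : ℕ∞) Ψ)
    (f : (Fin n → ℝ) → (Fin n → ℝ)) (g : Fin m → (Fin n → ℝ) → (Fin n → ℝ))
    (hf : ContDiff ℝ (⊤ : ℕ∞) f) (hg : ∀ i, ContDiff ℝ (⊤ : ℕ∞) (g i))
    (A : Matrix (Fin r) (Fin r) ℝ) (B : Fin m → Matrix (Fin r) (Fin r) ℝ)
    (hA : ∀ x, fderiv ℝ Ψ x (f x) = A.mulVec (Ψ x))
    (hB : ∀ i, ∀ x, fderiv ℝ Ψ x (g i x) = (B i).mulVec (Ψ x))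
    (P : (Fin r → ℝ) → (Fin n → ℝ)) (hP : ∀ x, P (Ψ x) = x)
    (u : ℝ → (Fin m → ℝ)) (hu : ContinuousOn u (Icc (0 : ℝ) T))
    (x : ℝ → (Fin n → ℝ))
    (hx : ∀ t ∈ Icc (0 : ℝ) T,
      HasDerivWithinAt x (f (x t) + ∑ i, u t i • g i (x t)) (Icc (0 : ℝ) T) t)
    (z : ℝ → (Fin r → ℝ))
    (hz : ∀ t ∈ Icc (0 : ℝ) T,
      HasDerivWithinAt z (A.mulVec (z t) + ∑ i, u t i • (B i).mulVec (z t)) (Icc (0 : ℝ) T) t)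
    (hz0 : z 0 = Ψ (x 0)) :
    ∀ t ∈ Icc (0 : ℝ) T, z t = Ψ (x t) ∧ x t = P (z t) :=
  nonlinear_flow_eq_projected_bilinear_flow_general T Ψ hΨ f g A B hA hB P hP u hu x hx z hz hz0
end

section
/- Let Ψ: ℝⁿ → ℝʳ be smooth and suppose Ψ exactly bilinearizes the system with vector fields f, g_1, …, g_m and matrices A, B_1, …, B_m, and let P: ℝʳ → ℝⁿ satisfy P(Ψ(x)) = x for all x. Let 0 = t₀ ≤ t₁ ≤ ⋯ ≤ t_s = T be a partition, let 𝔲₀, …, 𝔲_{s−1} ∈ ℝᵐ be constant control vectors, and let x: [0, T] → ℝⁿ be continuous and satisfy, on each subinterval [t_k, t_{k+1}], ẋ(t) = f(x(t)) + Σᵢ (𝔲_k)ᵢ gᵢ(x(t)). Then x(T) = P( exp(δ_{s−1} M(𝔲_{s−1})) ⋯ exp(δ₁ M(𝔲₁)) exp(δ₀ M(𝔲₀)) Ψ(x(0)) ), where M(𝔲) = A + Σ_{i=1}^m 𝔲ᵢ Bᵢ, δ_k = t_{k+1} − t_k, and exp denotes the matrix exponential. -/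
/-! On each interval `[tₖ, tₖ₊₁]` the chain rule and the bilinearization identities turn
`y = Ψ ∘ x` into a solution of the linear ODE `y' = M(𝔲ₖ) y`, `M(𝔲) = A + ∑ᵢ 𝔲ᵢ Bᵢ`.
The integrating factor `exp (-τ M) y(τ)` has zero derivative, so
`y(tₖ₊₁) = exp (δₖ M(𝔲ₖ)) y(tₖ)`; chaining these over the partition and applying the left
inverse `P` recovers `x(T)`. -/

open Set Matrix

section
variable {ι : Type*} [Fintype ι] [DecidableEq ι]

theorem Matrix.exp_smul_mul_exp_smul (M : Matrix ι ι ℝ) (a b : ℝ) :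
    NormedSpace.exp (a • M) * NormedSpace.exp (b • M) = NormedSpace.exp ((a + b) • M) := by
  rw [add_smul, Matrix.exp_add_of_commute _ _ ((Commute.refl M).smul_left a |>.smul_right b)]

open scoped Matrix.Norms.Operator in
theorem hasDerivWithinAt_exp_smul_neg_mulVec {M : Matrix ι ι ℝ} {z : ℝ → ι → ℝ} {s : Set ℝ}
    {τ : ℝ} (hz : HasDerivWithinAt z (M *ᵥ z τ) s τ) :
    HasDerivWithinAt (fun σ => NormedSpace.exp (σ • -M) *ᵥ z σ) 0 s τ := by
  -- `M ↦ (M *ᵥ ·)` as a continuous linear map, so that the product rule `clm_apply` applies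
  let mulVecCLM : Matrix ι ι ℝ ≃L[ℝ] ((ι → ℝ) →L[ℝ] ι → ℝ) :=
    (Matrix.toLin'.trans LinearMap.toContinuousLinearMap).toContinuousLinearEquiv
  have := (mulVecCLM.hasFDerivAt.comp_hasDerivAt τ
    (hasDerivAt_exp_smul_const (-M) τ)).hasDerivWithinAt.clm_apply hz
  refine this.congr_deriv ?_
  change (NormedSpace.exp (τ • -M) * -M) *ᵥ z τ + NormedSpace.exp (τ • -M) *ᵥ (M *ᵥ z τ) = 0
  rw [mul_neg, neg_mulVec, mulVec_mulVec, neg_add_cancel]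

theorem Matrix.eq_exp_smul_mulVec_of_hasDerivWithinAt {M : Matrix ι ι ℝ} {z : ℝ → ι → ℝ}
    {a b : ℝ} (hab : a ≤ b)
    (hz : ∀ τ ∈ Icc a b, HasDerivWithinAt z (M *ᵥ z τ) (Icc a b) τ) :
    z b = NormedSpace.exp ((b - a) • M) *ᵥ z a := by
  set w : ℝ → ι → ℝ := fun σ => NormedSpace.exp (σ • -M) *ᵥ z σ
  have hw (τ : ℝ) (hτ : τ ∈ Icc a b) : HasDerivWithinAt w 0 (Icc a b) τ :=
    hasDerivWithinAt_exp_smul_neg_mulVec (hz τ hτ)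
  have hwb : w b = w a :=
    constant_of_has_deriv_right_zero (fun τ hτ => (hw τ hτ).continuousWithinAt)
      (fun τ hτ => (hw τ (Ico_subset_Icc_self hτ)).mono_of_mem_nhdsWithin
        (Icc_mem_nhdsGE_of_mem hτ)) b (right_mem_Icc.2 hab)
  have exp_mul_w (σ τ : ℝ) :
      NormedSpace.exp (σ • M) *ᵥ w τ = NormedSpace.exp ((σ - τ) • M) *ᵥ z τ := by
    rw [mulVec_mulVec, smul_neg, ← neg_smul, exp_smul_mul_exp_smul, sub_eq_add_neg]
  calc z b = NormedSpace.exp (b • M) *ᵥ w b := by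
        rw [exp_mul_w, sub_self, zero_smul, NormedSpace.exp_zero, one_mulVec]
    _ = NormedSpace.exp ((b - a) • M) *ᵥ z a := by rw [hwb, exp_mul_w]

theorem Matrix.last_eq_ofFn_reverse_prod_mulVec {R : Type*} [Semiring R] :
    ∀ {s : ℕ} (y : Fin (s + 1) → ι → R) (F : Fin s → Matrix ι ι R),
      (∀ k, y k.succ = F k *ᵥ y k.castSucc) → y (Fin.last s) = (List.ofFn F).reverse.prod *ᵥ y 0
  | 0, y, F, _ => by simp
  | s + 1, y, F, h => by
    have ih := last_eq_ofFn_reverse_prod_mulVec (fun k => y k.castSucc) _ fun k => h k.castSucc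
    rw [Fin.castSucc_zero] at ih
    rw [List.ofFn_succ', List.concat_eq_append, List.reverse_append, List.reverse_singleton,
      List.singleton_append, List.prod_cons, ← mulVec_mulVec, ← ih]
    exact h (Fin.last s)
end

section
variable {E : Type*} [NormedAddCommGroup E] [NormedSpace ℝ E] {ι κ : Type*} [Fintype ι] [Fintype κ]

def ExactlyBilinearizes (Ψ : E → ι → ℝ) (f : E → E) (g : κ → E → E) (A : Matrix ι ι ℝ)
    (B : κ → Matrix ι ι ℝ) : Prop :=
  (∀ x, fderiv ℝ Ψ x (f x) = A *ᵥ Ψ x) ∧ ∀ i x, fderiv ℝ Ψ x (g i x) = B i *ᵥ Ψ x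

theorem ExactlyBilinearizes.hasDerivWithinAt_comp {Ψ : E → ι → ℝ} {f : E → E} {g : κ → E → E}
    {A : Matrix ι ι ℝ} {B : κ → Matrix ι ι ℝ} (hΨfg : ExactlyBilinearizes Ψ f g A B)
    {u : κ → ℝ} {x : ℝ → E} {s : Set ℝ} {τ : ℝ} (hΨ : DifferentiableAt ℝ Ψ (x τ))
    (hx : HasDerivWithinAt x (f (x τ) + ∑ i, u i • g i (x τ)) s τ) :
    HasDerivWithinAt (Ψ ∘ x) ((A + ∑ i, u i • B i) *ᵥ Ψ (x τ)) s τ := by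
  have := hΨ.hasFDerivAt.comp_hasDerivWithinAt τ hx
  simpa [hΨfg.1, hΨfg.2, add_mulVec, sum_mulVec, smul_mulVec] using this

end

theorem piecewise_constant_control_endpoint_general {n r m s : ℕ}
    (Ψ : (Fin n → ℝ) → (Fin r → ℝ)) (hΨ : ContDiff ℝ (⊤ : ℕ∞) Ψ)
    (f : (Fin n → ℝ) → (Fin n → ℝ)) (g : Fin m → (Fin n → ℝ) → (Fin n → ℝ))
    (A : Matrix (Fin r) (Fin r) ℝ) (B : Fin m → Matrix (Fin r) (Fin r) ℝ)
    (hA : ∀ x, fderiv ℝ Ψ x (f x) = A.mulVec (Ψ x))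
    (hB : ∀ i, ∀ x, fderiv ℝ Ψ x (g i x) = (B i).mulVec (Ψ x))
    (P : (Fin r → ℝ) → (Fin n → ℝ)) (hP : ∀ x, P (Ψ x) = x)
    (t : Fin (s + 1) → ℝ) (ht : Monotone t)
    (𝔲 : Fin s → (Fin m → ℝ))
    (x : ℝ → (Fin n → ℝ))
    (hx : ∀ k : Fin s, ∀ τ ∈ Icc (t k.castSucc) (t k.succ),
      HasDerivWithinAt x (f (x τ) + ∑ i, 𝔲 k i • g i (x τ)) (Icc (t k.castSucc) (t k.succ)) τ) :
    x (t (Fin.last s)) =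
      P ((List.ofFn fun k : Fin s =>
            NormedSpace.exp
              ((t k.succ - t k.castSucc) • (A + ∑ i, 𝔲 k i • B i))).reverse.prod.mulVec
          (Ψ (x (t 0)))) := by
  have hΨfg : ExactlyBilinearizes Ψ f g A B := ⟨hA, hB⟩
  have step (k : Fin s) : Ψ (x (t k.succ)) =
      NormedSpace.exp ((t k.succ - t k.castSucc) • (A + ∑ i, 𝔲 k i • B i)) *ᵥ
        Ψ (x (t k.castSucc)) :=
    eq_exp_smul_mulVec_of_hasDerivWithinAt (ht k.castSucc_le_succ) fun τ hτ =>
      hΨfg.hasDerivWithinAt_comp (hΨ.differentiable (by simp) _) (hx k τ hτ)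
  rw [← hP (x (t (Fin.last s))), last_eq_ofFn_reverse_prod_mulVec (fun k => Ψ (x (t k))) _ step]

/-- under exact bilinearization with left inverse `P`, the endpoint of a solution
driven by piecewise-constant controls is obtained by projecting the product of the matrix
exponentials `exp(δₖ (A + Σᵢ 𝔲ₖᵢ Bᵢ))` (applied in order) to the lifted initial state. -/
theorem piecewise_constant_control_endpoint {n r m s : ℕ}
    (Ψ : (Fin n → ℝ) → (Fin r → ℝ)) (hΨ : ContDiff ℝ (⊤ : ℕ∞) Ψ)
    (f : (Fin n → ℝ) → (Fin n → ℝ)) (g : Fin m → (Fin n → ℝ) → (Fin n → ℝ))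
    (hf : ContDiff ℝ (⊤ : ℕ∞) f) (hg : ∀ i, ContDiff ℝ (⊤ : ℕ∞) (g i))
    (A : Matrix (Fin r) (Fin r) ℝ) (B : Fin m → Matrix (Fin r) (Fin r) ℝ)
    (hA : ∀ x, fderiv ℝ Ψ x (f x) = A.mulVec (Ψ x))
    (hB : ∀ i, ∀ x, fderiv ℝ Ψ x (g i x) = (B i).mulVec (Ψ x))
    (P : (Fin r → ℝ) → (Fin n → ℝ)) (hP : ∀ x, P (Ψ x) = x)
    (t : Fin (s + 1) → ℝ) (ht : Monotone t) (ht0 : t 0 = 0)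
    (𝔲 : Fin s → (Fin m → ℝ))
    (x : ℝ → (Fin n → ℝ))
    (hx : ∀ k : Fin s, ∀ τ ∈ Icc (t k.castSucc) (t k.succ),
      HasDerivWithinAt x (f (x τ) + ∑ i, 𝔲 k i • g i (x τ)) (Icc (t k.castSucc) (t k.succ)) τ) :
    x (t (Fin.last s)) =
      P ((List.ofFn fun k : Fin s =>
            NormedSpace.exp
              ((t k.succ - t k.castSucc) • (A + ∑ i, 𝔲 k i • B i))).reverse.prod.mulVec
          (Ψ (x (t 0)))) :=
  piecewise_constant_control_endpoint_general Ψ hΨ f g A B hA hB P hP t ht 𝔲 x hx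
end

section
/- Define Ψ: ℝ³ → ℝ⁶ by Ψ(x₁, x₂, x₃) = (x₁, x₂, x₃, cos x₃, sin x₃, 1), the unicycle control vector fields g₁(x) = (cos x₃, sin x₃, 0) and g₂(x) = (0, 0, 1) on ℝ³, and the matrices B₁ = e₁e₄' + e₂e₅' and B₂ = e₃e₆' − e₄e₅' + e₅e₄' in ℝ^{6×6}, where e_j ∈ ℝ⁶ is the j-th standard basis vector. Then DΨ(x) g₁(x) = B₁ Ψ(x) and DΨ(x) g₂(x) = B₂ Ψ(x) for all x ∈ ℝ³; moreover Ψ is injective and its Fréchet derivative DΨ(x) is injective at every x ∈ ℝ³, so Ψ is a smooth embedding that exactly bilinearizes the unicycle system ẋ = u₁ g₁(x) + u₂ g₂(x). -/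
/-!
The first three coordinates of `Ψ x` recover `x`, so the coordinate projection `ℝ⁶ → ℝ³` is a
continuous linear left inverse of `Ψ`; by the chain rule it is also a left inverse of every
`DΨ(x)`. This gives injectivity of `Ψ` and of `DΨ(x)` and the embedding property at once. The
bilinearization identities are a componentwise check of
`DΨ(x) v = (v₁, v₂, v₃, -sin x₃ · v₃, cos x₃ · v₃, 0)`.
-/

open Matrix Function

theorem Matrix.vecMulVec_single_one_mulVec {n α : Type*} [Fintype n] [DecidableEq n]
    [NonAssocSemiring α] (i j : n) (w : n → α) :
    vecMulVec (Pi.single i 1) (Pi.single j 1) *ᵥ w = Pi.single i (w j) := by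
  rw [← single_eq_single_vecMulVec_single, single_mulVec, one_mul]
  rfl

theorem Function.LeftInverse.injective_fderiv {𝕜 E F : Type*} [NontriviallyNormedField 𝕜]
    [NormedAddCommGroup E] [NormedSpace 𝕜 E] [NormedAddCommGroup F] [NormedSpace 𝕜 F]
    {L : F →L[𝕜] E} {f : E → F} (hLf : LeftInverse L f) {x : E}
    (hf : DifferentiableAt 𝕜 f x) : Injective (fderiv 𝕜 f x) := by
  have hcomp : L.comp (fderiv 𝕜 f x) = ContinuousLinearMap.id 𝕜 E := by
    rw [← L.fderiv, ← fderiv_comp x L.differentiableAt hf, hLf.comp_eq_id, fderiv_id]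
  exact LeftInverse.injective (DFunLike.congr_fun hcomp)

noncomputable section

def unicycleLift (x : Fin 3 → ℝ) : Fin 6 → ℝ :=
  ![x 0, x 1, x 2, Real.cos (x 2), Real.sin (x 2), 1]

def unicycleLiftLeftInv : (Fin 6 → ℝ) →L[ℝ] (Fin 3 → ℝ) :=
  ContinuousLinearMap.pi fun i => ContinuousLinearMap.proj (Fin.castAdd 3 i)

end

theorem leftInverse_unicycleLiftLeftInv : LeftInverse unicycleLiftLeftInv unicycleLift := by
  intro x
  ext i
  fin_cases i <;> rfl

theorem differentiable_unicycleLift : Differentiable ℝ unicycleLift := by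
  refine differentiable_pi.2 fun i => ?_
  fin_cases i <;> simp only [unicycleLift, Fin.reduceFinMk, Fin.zero_eta, Fin.mk_one,
    Matrix.cons_val_zero, Matrix.cons_val_one, Matrix.cons_val] <;> fun_prop

theorem fderiv_unicycleLift_apply (x v : Fin 3 → ℝ) :
    fderiv ℝ unicycleLift x v =
      ![v 0, v 1, v 2, -Real.sin (x 2) * v 2, Real.cos (x 2) * v 2, 0] := by
  have hcoord (i : Fin 3) : fderiv ℝ (fun x : Fin 3 → ℝ => x i) x = .proj i :=
    (ContinuousLinearMap.proj (R := ℝ) (φ := fun _ : Fin 3 => ℝ) i).fderiv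
  rw [fderiv_pi fun i => differentiable_pi.1 differentiable_unicycleLift i x]
  ext i
  fin_cases i <;> simp [unicycleLift, hcoord, fderiv_cos (differentiableAt_apply 2 x),
    fderiv_sin (differentiableAt_apply 2 x)]

theorem fderiv_unicycleLift_drive (x : Fin 3 → ℝ) :
    fderiv ℝ unicycleLift x ![Real.cos (x 2), Real.sin (x 2), 0] =
      (vecMulVec (Pi.single 0 1) (Pi.single 3 1) + vecMulVec (Pi.single 1 1) (Pi.single 4 1))
        *ᵥ unicycleLift x := by
  rw [fderiv_unicycleLift_apply, add_mulVec, vecMulVec_single_one_mulVec,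
    vecMulVec_single_one_mulVec]
  ext i
  fin_cases i <;> simp [unicycleLift]

theorem fderiv_unicycleLift_steer (x : Fin 3 → ℝ) :
    fderiv ℝ unicycleLift x ![0, 0, 1] =
      (vecMulVec (Pi.single 2 1) (Pi.single 5 1) - vecMulVec (Pi.single 3 1) (Pi.single 4 1) +
        vecMulVec (Pi.single 4 1) (Pi.single 3 1)) *ᵥ unicycleLift x := by
  rw [fderiv_unicycleLift_apply, add_mulVec, sub_mulVec, vecMulVec_single_one_mulVec,
    vecMulVec_single_one_mulVec, vecMulVec_single_one_mulVec]
  ext i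
  fin_cases i <;> simp [unicycleLift]

/-- the map `Ψ(x) = (x₁, x₂, x₃, cos x₃, sin x₃, 1)` pushes the unicycle control
vector fields `g₁(x) = (cos x₃, sin x₃, 0)` and `g₂(x) = (0,0,1)` forward to the linear fields
given by `B₁ = e₁e₄' + e₂e₅'` and `B₂ = e₃e₆' − e₄e₅' + e₅e₄'`; moreover `Ψ` is injective with
everywhere injective Fréchet derivative (indeed a topological embedding), i.e. `Ψ` is a smooth
embedding exactly bilinearizing the unicycle system. -/
theorem unicycle_exactly_bilinearized
    (Ψ : (Fin 3 → ℝ) → (Fin 6 → ℝ))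
    (hΨ : Ψ = fun x => ![x 0, x 1, x 2, Real.cos (x 2), Real.sin (x 2), 1])
    (g₁ g₂ : (Fin 3 → ℝ) → (Fin 3 → ℝ))
    (hg₁ : g₁ = fun x => ![Real.cos (x 2), Real.sin (x 2), 0])
    (hg₂ : g₂ = fun _ => ![0, 0, 1])
    (e : Fin 6 → (Fin 6 → ℝ)) (he : e = fun j => Pi.single j 1)
    (B₁ B₂ : Matrix (Fin 6) (Fin 6) ℝ)
    (hB₁ : B₁ = vecMulVec (e 0) (e 3) + vecMulVec (e 1) (e 4))
    (hB₂ : B₂ = vecMulVec (e 2) (e 5) - vecMulVec (e 3) (e 4) + vecMulVec (e 4) (e 3)) :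
    (∀ x, fderiv ℝ Ψ x (g₁ x) = B₁.mulVec (Ψ x)) ∧
    (∀ x, fderiv ℝ Ψ x (g₂ x) = B₂.mulVec (Ψ x)) ∧
    Function.Injective Ψ ∧
    (∀ x, Function.Injective (fderiv ℝ Ψ x)) ∧
    Topology.IsEmbedding Ψ := by
  obtain rfl : Ψ = unicycleLift := hΨ
  subst hg₁ hg₂ he hB₁ hB₂
  exact ⟨fderiv_unicycleLift_drive, fderiv_unicycleLift_steer,
    leftInverse_unicycleLiftLeftInv.injective,
    fun x => leftInverse_unicycleLiftLeftInv.injective_fderiv (differentiable_unicycleLift x),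
    leftInverse_unicycleLiftLeftInv.isEmbedding unicycleLiftLeftInv.continuous
      differentiable_unicycleLift.continuous⟩
end
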